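/- Let α, β, θ > 0, s ∈ ℝ, ε > 0, and N ∈ ℕ with N ≥ 1. Then for every k ∈ ℕ, every t ≥ 0, and every ξ ∈ ℝ, if f_k(t, ξ) ≠ 0 then there exist j₁, j₂ ∈ ℕ₀ with j₁ + j₂ = k such that j₂ N + j₁ N^{−θ} ≤ ξ ≤ j₂ N + (k + j₁) N^{−θ}. In other words, f_k(t,·) vanishes identically outside the finite union of intervals ⋃_{j₁+j₂=k} [j₂ N + j₁ N^{−θ}, j₂ N + (k+j₁) N^{−θ}]. -/

import Mathlib

open MeasureTheory

/-- The Fourier transform of the initial datum: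
`φ̂(ξ) = ε N^{θ/2} 1_{[N^{−θ}, 2N^{−θ}]}(ξ) + ε N^{−s+θ/2} 1_{[N, N+N^{−θ}]}(ξ)`. -/
noncomputable def phiHat (θ s ε : ℝ) (N : ℕ) (ξ : ℝ) : ℝ :=
  ε * (N : ℝ) ^ (θ / 2) *
      Set.indicator (Set.Icc ((N : ℝ) ^ (-θ)) (2 * (N : ℝ) ^ (-θ))) (fun _ => (1 : ℝ)) ξ +
    ε * (N : ℝ) ^ (-s + θ / 2) *
      Set.indicator (Set.Icc ((N : ℝ)) ((N : ℝ) + (N : ℝ) ^ (-θ))) (fun _ => (1 : ℝ)) ξ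

/-- The Picard iterates on the Fourier side for `∂ₜu + iD^α u = u D^β u` with datum `F`. -/
noncomputable def picard (α β : ℝ) (F : ℝ → ℂ) : ℕ → ℝ → ℝ → ℂ
  | 0 => fun _ _ => 0
  | 1 => fun t ξ => Complex.exp (-Complex.I * (t : ℂ) * ((|ξ| ^ α : ℝ) : ℂ)) * F ξ
  | (k + 2) => fun t ξ =>
      ∑ i ∈ (Finset.range (k + 1)).attach,
        ∫ t' in (0:ℝ)..t,
          Complex.exp (-Complex.I * ((t - t' : ℝ) : ℂ) * ((|ξ| ^ α : ℝ) : ℂ)) *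
            ∫ η : ℝ, picard α β F (i.1 + 1) t' (ξ - η) * ((|η| ^ β : ℝ) : ℂ) *
              picard α β F (k + 1 - i.1) t' η
  termination_by k => k
  decreasing_by
  all_goals (have h := i.2; simp only [Finset.mem_range] at h; omega)

open Function Set Pointwise

/-!
Multiplication by the phase `e^{-i(t-t')|ξ|^α}`, the weight `|η|^β` and integration in time
cannot enlarge the frequency support, while the quadratic term `∫ f_{k₁}(ξ-η) |η|^β f_{k₂}(η) dη`
puts the support of `f_{k₁+k₂}` inside the sumset of the supports of `f_{k₁}` and `f_{k₂}`.
By induction, `f_k(t, ·)` is supported in the `k`-fold sumset of the support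
`[N^{-θ}, 2N^{-θ}] ∪ [N, N + N^{-θ}]` of `φ̂`, which is the union of intervals in the statement.
-/

theorem exists_ne_zero_of_intervalIntegral_ne_zero {E : Type*} [NormedAddCommGroup E]
    [NormedSpace ℝ E] {μ : Measure ℝ} {f : ℝ → E} {a b : ℝ} (h : ∫ x in a..b, f x ∂μ ≠ 0) :
    ∃ x, f x ≠ 0 := by
  by_contra! hf
  exact h (by simp [hf])

theorem support_integral_mul_sub_subset {G E : Type*} [AddCommGroup G] [MeasurableSpace G]
    {μ : Measure G} [NormedRing E] [NormedSpace ℝ E] (g w h : G → E) :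
    support (fun ξ => ∫ η, g (ξ - η) * w η * h η ∂μ) ⊆ support g + support h := by
  intro ξ hξ
  obtain ⟨η, hη⟩ := exists_ne_zero_of_integral_ne_zero hξ
  exact mem_add.mpr ⟨ξ - η, left_ne_zero_of_mul (left_ne_zero_of_mul hη), η,
    right_ne_zero_of_mul hη, sub_add_cancel ξ η⟩

section Picard

variable (α β : ℝ) (F : ℝ → ℂ)

theorem support_picard_one_subset (t : ℝ) : support (picard α β F 1 t) ⊆ support F := by
  intro ξ hξ
  rw [mem_support, picard] at hξ
  exact right_ne_zero_of_mul hξ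

theorem support_picard_add_two_subset (k : ℕ) (t : ℝ) :
    support (picard α β F (k + 2) t) ⊆
      ⋃ i ∈ Finset.range (k + 1), ⋃ t' : ℝ,
        support (picard α β F (i + 1) t') + support (picard α β F (k + 1 - i) t') := by
  intro ξ hξ
  rw [mem_support, picard] at hξ
  obtain ⟨⟨i, hi⟩, -, hsummand⟩ := Finset.exists_ne_zero_of_sum_ne_zero hξ
  obtain ⟨t', ht'⟩ := exists_ne_zero_of_intervalIntegral_ne_zero hsummand
  simp only [mem_iUnion]
  exact ⟨i, hi, t', support_integral_mul_sub_subset _ _ _ (right_ne_zero_of_mul ht')⟩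

theorem support_picard_subset {A : ℕ → Set ℝ} (hF : support F ⊆ A 1)
    (hA : ∀ i j, A i + A j ⊆ A (i + j)) (k : ℕ) (t : ℝ) :
    support (picard α β F k t) ⊆ A k := by
  induction k using Nat.strong_induction_on generalizing t with
  | _ k ih =>
    match k with
    | 0 => simp [picard]
    | 1 => exact (support_picard_one_subset α β F t).trans hF
    | k + 2 =>
      refine (support_picard_add_two_subset α β F k t).trans ?_
      simp only [iUnion_subset_iff, Finset.mem_range]
      intro i hi t'
      have hindex : i + 1 + (k + 1 - i) = k + 2 := by omega
      calc support (picard α β F (i + 1) t') + support (picard α β F (k + 1 - i) t')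
          ⊆ A (i + 1) + A (k + 1 - i) := add_subset_add (ih _ (by omega) t') (ih _ (by omega) t')
        _ ⊆ A (k + 2) := hindex ▸ hA _ _

end Picard

/-- For `0 ≤ δ` this is the `k`-fold sumset of `[δ, 2δ] ∪ [a, a + δ]`: `j₂` summands come from
the second interval and `j₁` from the first. -/
def bumpSumset (a δ : ℝ) (k : ℕ) : Set ℝ :=
  {ξ | ∃ j₁ j₂ : ℕ, j₁ + j₂ = k ∧
    (j₂ : ℝ) * a + (j₁ : ℝ) * δ ≤ ξ ∧ ξ ≤ (j₂ : ℝ) * a + ((k : ℝ) + (j₁ : ℝ)) * δ}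

theorem bumpSumset_add_subset (a δ : ℝ) (i j : ℕ) :
    bumpSumset a δ i + bumpSumset a δ j ⊆ bumpSumset a δ (i + j) := by
  rintro _ ⟨x, ⟨p₁, p₂, rfl, hx₁, hx₂⟩, y, ⟨q₁, q₂, rfl, hy₁, hy₂⟩, rfl⟩
  refine ⟨p₁ + q₁, p₂ + q₂, by omega, ?_, ?_⟩ <;> push_cast at hx₂ hy₂ ⊢ <;> linarith

theorem Icc_union_Icc_subset_bumpSumset_one (a δ : ℝ) :
    Icc δ (2 * δ) ∪ Icc a (a + δ) ⊆ bumpSumset a δ 1 := by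
  rintro ξ (⟨h₁, h₂⟩ | ⟨h₁, h₂⟩)
  · exact ⟨1, 0, rfl, by push_cast; linarith, by push_cast; linarith⟩
  · exact ⟨0, 1, rfl, by push_cast; linarith, by push_cast; linarith⟩

theorem support_phiHat_subset (θ s ε : ℝ) (N : ℕ) :
    support (phiHat θ s ε N) ⊆
      Icc ((N : ℝ) ^ (-θ)) (2 * (N : ℝ) ^ (-θ)) ∪ Icc (N : ℝ) ((N : ℝ) + (N : ℝ) ^ (-θ)) :=
  (support_add _ _).trans <| union_subset_union
    ((support_mul_subset_right _ _).trans support_indicator_subset)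
    ((support_mul_subset_right _ _).trans support_indicator_subset)

theorem support_picard_iterate_general (α β θ s ε : ℝ) (N : ℕ) (k : ℕ) (t : ℝ) (ξ : ℝ)
    (hne : picard α β (fun x => ((phiHat θ s ε N x : ℝ) : ℂ)) k t ξ ≠ 0) :
    ∃ j₁ j₂ : ℕ, j₁ + j₂ = k ∧
      (j₂ : ℝ) * (N : ℝ) + (j₁ : ℝ) * (N : ℝ) ^ (-θ) ≤ ξ ∧
      ξ ≤ (j₂ : ℝ) * (N : ℝ) + ((k : ℝ) + (j₁ : ℝ)) * (N : ℝ) ^ (-θ) := by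
  have hdatum : support (fun x => ((phiHat θ s ε N x : ℝ) : ℂ)) ⊆ bumpSumset N ((N : ℝ) ^ (-θ)) 1 :=
    (support_comp_eq _ Complex.ofReal_eq_zero _).subset.trans <|
      (support_phiHat_subset θ s ε N).trans (Icc_union_Icc_subset_bumpSumset_one _ _)
  exact support_picard_subset α β _ hdatum (bumpSumset_add_subset _ _) k t hne

/-- Frequency support of the `k`-th Picard iterate: `f_k(t,·)` vanishes outside
`⋃_{j₁+j₂=k} [j₂N + j₁N^{−θ}, j₂N + (k+j₁)N^{−θ}]`. -/
theorem support_picard_iterate (α β θ s ε : ℝ) (hα : 0 < α) (hβ : 0 < β) (hθ : 0 < θ)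
    (hε : 0 < ε) (N : ℕ) (hN : 1 ≤ N) (k : ℕ) (hk : 1 ≤ k) (t : ℝ) (ht : 0 ≤ t) (ξ : ℝ)
    (hne : picard α β (fun x => ((phiHat θ s ε N x : ℝ) : ℂ)) k t ξ ≠ 0) :
    ∃ j₁ j₂ : ℕ, j₁ + j₂ = k ∧
      (j₂ : ℝ) * (N : ℝ) + (j₁ : ℝ) * (N : ℝ) ^ (-θ) ≤ ξ ∧
      ξ ≤ (j₂ : ℝ) * (N : ℝ) + ((k : ℝ) + (j₁ : ℝ)) * (N : ℝ) ^ (-θ) :=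
  support_picard_iterate_general α β θ s ε N k t ξ hne
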